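/- Let A be a POVM on finite-dimensional H whose center {A(x)}'' ∩ {A(x)}' is strictly larger than ℂ·1, let Λ be a channel compatible with A, and let B be a POVM with every effect B(y) ∈ Fix(Λ*) and Fix(Λ*) ⊆ {A(x)}'. Then the joint observable G(x,y) := Σ_i K_{x,i}* B(y) K_{x,i} (equal to A(x)B(y)) is not informationally complete: there exist distinct pure states ψ₀ and ψ₁ = Uψ₀, with U = ⊕_n e^{iθ_n} P_n a nontrivial central unitary, yielding identical joint outcome distributions. -/

import Mathlib

open Matrix
open scoped ComplexOrder

abbrev Mat (d : ℕ) := Matrix (Fin d) (Fin d) ℂ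

/-- A quantum state (density operator). -/
def IsState {d : ℕ} (ρ : Mat d) : Prop := ρ.PosSemidef ∧ ρ.trace = 1

/-- A POVM (observable with finite outcome set). -/
def IsPOVM {d : ℕ} {ι : Type} [Fintype ι] (A : ι → Mat d) : Prop :=
  (∀ x, (A x).PosSemidef) ∧ ∑ x, A x = 1

/-- The pair of states `ρ₁, ρ₂` is distinguishable by the observable `A`. -/
def Distinguishes {d : ℕ} {ι : Type} [Fintype ι] (A : ι → Mat d) (ρ₁ ρ₂ : Mat d) : Prop :=
  ∃ x, (ρ₁ * A x).trace ≠ (ρ₂ * A x).trace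

/-- Informational completeness of an observable. -/
def InfoComplete {d : ℕ} {ι : Type} [Fintype ι] (A : ι → Mat d) : Prop :=
  ∀ ρ₁ ρ₂ : Mat d, IsState ρ₁ → IsState ρ₂ →
    (∀ x, (ρ₁ * A x).trace = (ρ₂ * A x).trace) → ρ₁ = ρ₂

/-!
Since the channel `Λ ρ = ∑ K ρ Kᴴ` preserves the trace, `1` is not in the range of `Λ - id`, so `Λ`
has a nonzero fixed point; it can be taken Hermitian, and then its positive and negative parts are
fixed as well, which gives an invariant state `σ`. For an effect `B` fixed by the dual channel
`Λ*`, the positive matrix `∑ (K B - B K)ᴴ (K B - B K) = Λ*(B²) - B²` has zero expectation in `σ`,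
so every Kraus operator commutes with `B` on the range of `σ`, where the joint effect `G(x,y)`
therefore acts as `A(x) B(y)`. A Hermitian non-scalar element `W` of the center commutes with all
`A(x) B(y)`. If `W` does not commute with `σ`, the traceless Hermitian matrix `i [W, σ]` is
orthogonal to every `G(x,y)`; otherwise the range of `σ` contains an eigenvector `u` of `W`, and
`u vᴴ + v uᴴ` is, for an eigenvector `v` of another eigenvalue. The normalised positive and
negative parts of such a matrix are two different states with the same statistics.
-/

open scoped MatrixOrder ComplexStarModule

theorem exists_isSelfAdjoint_mem_notMem {A : Type*} [AddCommGroup A] [Module ℂ A]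
    [StarAddMonoid A] [StarModule ℂ A] {S T : Submodule ℂ A} (hS : ∀ a ∈ S, star a ∈ S)
    {a : A} (haS : a ∈ S) (haT : a ∉ T) : ∃ b ∈ S, IsSelfAdjoint b ∧ b ∉ T := by
  by_contra! h
  have hre : (ℜ a : A) ∈ S := by
    rw [realPart_apply_coe]
    exact S.smul_of_tower_mem _ (S.add_mem haS (hS a haS))
  have him : (ℑ a : A) ∈ S := by
    rw [imaginaryPart_apply_coe]
    exact S.smul_mem _ (S.smul_of_tower_mem _ (S.sub_mem haS (hS a haS)))
  apply haT
  rw [← realPart_add_I_smul_imaginaryPart a]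
  exact T.add_mem (h _ hre (ℜ a).2) (T.smul_mem _ (h _ him (ℑ a).2))

variable {d : ℕ}

theorem Matrix.PosSemidef.mul_eq_zero_of_trace_conjTranspose_mul_mul_eq_zero {M X : Mat d}
    (hM : M.PosSemidef) (h : (Xᴴ * M * X).trace = 0) : M * X = 0 := by
  obtain ⟨S, rfl⟩ := CStarAlgebra.nonneg_iff_eq_star_mul_self.mp hM.nonneg
  rw [star_eq_conjTranspose] at h ⊢
  have hSX : S * X = 0 := by
    rw [← trace_conjTranspose_mul_self_eq_zero_iff, conjTranspose_mul]
    simpa only [Matrix.mul_assoc] using h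
  rw [Matrix.mul_assoc, hSX, Matrix.mul_zero]

theorem IsStarProjection.trace_conjTranspose_mul_mul {R : Mat d} (hR : IsStarProjection R)
    (M : Mat d) : (Rᴴ * M * R).trace = (M * R).trace := by
  rw [trace_mul_cycle, ← star_eq_conjTranspose, hR.isSelfAdjoint.star_eq, hR.isIdempotentElem.eq,
    trace_mul_comm]

theorem Matrix.PosSemidef.trace_mul_nonneg_of_isStarProjection {M R : Mat d} (hM : M.PosSemidef)
    (hR : IsStarProjection R) : 0 ≤ (M * R).trace :=
  hR.trace_conjTranspose_mul_mul M ▸ (hM.conjTranspose_mul_mul_same R).trace_nonneg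

theorem Matrix.PosSemidef.mul_eq_zero_of_isStarProjection {M R : Mat d} (hM : M.PosSemidef)
    (hR : IsStarProjection R) (h : (M * R).trace = 0) : M * R = 0 :=
  hM.mul_eq_zero_of_trace_conjTranspose_mul_mul_eq_zero (hR.trace_conjTranspose_mul_mul M ▸ h)

/-- `R` is the spectral projection of `Y` onto its positive eigenvalues, so that `R * Y` and
`R * Y - Y` are the positive and negative parts of `Y`. -/
theorem Matrix.IsHermitian.exists_isStarProjection_posSemidef {Y : Mat d} (hY : Y.IsHermitian) :
    ∃ R : Mat d, IsStarProjection R ∧ Commute R Y ∧ (R * Y).PosSemidef ∧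
      (R * Y - Y).PosSemidef := by
  have hcont (f : ℝ → ℝ) : ContinuousOn f (spectrum ℝ Y) := finite_real_spectrum.continuousOn f
  set ind : ℝ → ℝ := fun t => if 0 < t then 1 else 0
  have hRY : cfc ind Y * Y = cfc (fun t => ind t * t) Y := by
    rw [cfc_mul _ _ _ (hcont _) (hcont _), cfc_id' ℝ Y hY.isSelfAdjoint]
  refine ⟨cfc ind Y, ⟨?_, IsSelfAdjoint.cfc⟩, (Commute.refl Y).cfc_real ind, ?_, ?_⟩
  · rw [IsIdempotentElem, ← cfc_mul _ _ _ (hcont _) (hcont _)]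
    exact cfc_congr fun t _ => by by_cases ht : 0 < t <;> simp [ind, ht]
  · rw [hRY, ← nonneg_iff_posSemidef]
    exact cfc_nonneg fun t _ => by by_cases ht : 0 < t <;> simp [ind, ht, le_of_lt]
  · rw [hRY, ← nonneg_iff_posSemidef, sub_nonneg]
    conv_lhs => rw [← cfc_id' ℝ Y hY.isSelfAdjoint]
    exact cfc_mono (hf := hcont _) (hg := hcont _) fun t _ => by
      simp only [ind]
      split_ifs <;> linarith

section PositiveMap

variable (Φ : Mat d →ₗ[ℂ] Mat d)

theorem exists_ne_zero_apply_eq_self (hd : 0 < d) (htr : ∀ X, (Φ X).trace = X.trace) :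
    ∃ X ≠ 0, Φ X = X := by
  by_contra! h
  have hinj : Function.Injective (Φ - LinearMap.id : Mat d →ₗ[ℂ] Mat d) := by
    rw [← LinearMap.ker_eq_bot, LinearMap.ker_eq_bot']
    intro X hX
    by_contra hX0
    exact h X hX0 (sub_eq_zero.mp hX)
  obtain ⟨X, hX⟩ := LinearMap.injective_iff_surjective.mp hinj 1
  have htrX : (0 : ℂ) = d := by simpa [trace_sub, htr] using congrArg trace hX
  exact hd.ne (by exact_mod_cast htrX)

variable {Φ} (hpos : ∀ X, X.PosSemidef → (Φ X).PosSemidef) (htr : ∀ X, (Φ X).trace = X.trace)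
include hpos htr

theorem apply_mul_eq_of_isStarProjection {Y R : Mat d} (hY : Φ Y = Y) (hR : IsStarProjection R)
    (hRY : Commute R Y) (hP : (R * Y).PosSemidef) (hN : (R * Y - Y).PosSemidef) :
    Φ (R * Y) = R * Y := by
  set P := Φ (R * Y)
  set N := Φ (R * Y - Y)
  have hP' : P.PosSemidef := hpos _ hP
  have hN' : N.PosSemidef := hpos _ hN
  have hPN : P - N = Y := by rw [← map_sub, sub_sub_cancel, hY]
  -- trace preservation forces `P` to live on the range of `R` and `N` on that of `1 - R`
  have hsum : (P * (1 - R)).trace + (N * R).trace = 0 := by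
    have : P * (1 - R) + N * R = P - Y * R := by rw [← hPN]; noncomm_ring
    rw [← trace_add, this, trace_sub, htr, trace_mul_comm, sub_self]
  obtain ⟨htrP, htrN⟩ := (add_eq_zero_iff_of_nonneg
    (hP'.trace_mul_nonneg_of_isStarProjection hR.one_sub)
    (hN'.trace_mul_nonneg_of_isStarProjection hR)).mp hsum
  have hPR : P = P * R := by
    have := hP'.mul_eq_zero_of_isStarProjection hR.one_sub htrP
    rwa [mul_sub, mul_one, sub_eq_zero] at this
  have hRP : P = R * P := by
    have hRH : R.IsHermitian := hR.isSelfAdjoint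
    have := congrArg conjTranspose hPR
    rwa [conjTranspose_mul, hP'.isHermitian.eq, hRH.eq] at this
  have hNR : N * R = 0 := hN'.mul_eq_zero_of_isStarProjection hR htrN
  calc P = R * (Y + N) * R := by rw [← hPN, sub_add_cancel, mul_assoc, ← hPR, ← hRP]
    _ = R * Y := by
      rw [mul_add, add_mul, mul_assoc R N, hNR, mul_zero, add_zero, hRY.eq, mul_assoc,
        hR.isIdempotentElem.eq]

theorem exists_posSemidef_ne_zero_apply_eq_self (hd : 0 < d)
    (hstar : ∀ X, Φ Xᴴ = (Φ X)ᴴ) : ∃ σ : Mat d, σ.PosSemidef ∧ σ ≠ 0 ∧ Φ σ = σ := by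
  obtain ⟨X, hX0, hX⟩ := exists_ne_zero_apply_eq_self Φ hd htr
  have hfix {Y : Mat d} : Y ∈ LinearMap.ker (Φ - LinearMap.id) ↔ Φ Y = Y := by
    rw [LinearMap.mem_ker, LinearMap.sub_apply, LinearMap.id_apply, sub_eq_zero]
  obtain ⟨Y, hYfix, hY, hY0⟩ := exists_isSelfAdjoint_mem_notMem (T := ⊥)
    (fun Z hZ => hfix.mpr ((hstar Z).trans (congrArg _ (hfix.mp hZ)))) (hfix.mpr hX)
    (by rwa [Submodule.mem_bot])
  rw [hfix] at hYfix
  rw [Submodule.mem_bot] at hY0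
  obtain ⟨R, hR, hRY, hP, hN⟩ := hY.isHermitian.exists_isStarProjection_posSemidef
  have hPfix := apply_mul_eq_of_isStarProjection hpos htr hYfix hR hRY hP hN
  by_cases hP0 : R * Y = 0
  · exact ⟨R * Y - Y, hN, by simpa [hP0] using hY0, by rw [map_sub, hPfix, hYfix]⟩
  · exact ⟨R * Y, hP, hP0, hPfix⟩

end PositiveMap

section Kraus

variable {α : Type*} [Fintype α] (K : α → Mat d)

/-- Schrödinger picture; the dual channel is `krausMap (fun a => (K a)ᴴ)`. -/
noncomputable def krausMap : Mat d →ₗ[ℂ] Mat d :=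
  ∑ a, (LinearMap.mulLeft ℂ (K a)).comp (LinearMap.mulRight ℂ (K a)ᴴ)

theorem krausMap_apply (X : Mat d) : krausMap K X = ∑ a, K a * X * (K a)ᴴ := by
  simp [krausMap, mul_assoc]

theorem krausMap_conjTranspose (X : Mat d) : krausMap K Xᴴ = (krausMap K X)ᴴ := by
  simp [krausMap_apply, conjTranspose_sum, mul_assoc]

theorem Matrix.PosSemidef.krausMap {X : Mat d} (hX : X.PosSemidef) :
    (krausMap K X).PosSemidef := by
  rw [krausMap_apply]
  exact posSemidef_sum _ fun a _ => hX.mul_mul_conjTranspose_same (K a)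

theorem trace_krausMap_mul (X Y : Mat d) :
    (krausMap K X * Y).trace = (X * krausMap (fun a => (K a)ᴴ) Y).trace := by
  simp only [krausMap_apply, conjTranspose_conjTranspose, Finset.sum_mul, Finset.mul_sum,
    trace_sum]
  refine Finset.sum_congr rfl fun a _ => ?_
  rw [mul_assoc, mul_assoc, trace_mul_comm]
  simp only [Matrix.mul_assoc]

variable {K} (hK : ∑ a, (K a)ᴴ * K a = 1)
include hK

theorem trace_krausMap (X : Mat d) : (krausMap K X).trace = X.trace := by
  simpa [krausMap_apply, hK] using trace_krausMap_mul K X 1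

theorem exists_posSemidef_ne_zero_krausMap_eq_self (hd : 0 < d) :
    ∃ σ : Mat d, σ.PosSemidef ∧ σ ≠ 0 ∧ krausMap K σ = σ :=
  exists_posSemidef_ne_zero_apply_eq_self (fun _ hX => hX.krausMap K) (trace_krausMap hK) hd
    (krausMap_conjTranspose K)

theorem mul_sub_mul_mul_eq_zero_of_krausMap_eq_self {σ B : Mat d} (hσ : σ.PosSemidef)
    (hσK : krausMap K σ = σ) (hB : B.IsHermitian) (hBK : krausMap (fun a => (K a)ᴴ) B = B)
    (a : α) : (K a * B - B * K a) * σ = 0 := by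
  set D := fun a => K a * B - B * K a
  have hBK' : ∑ a, (K a)ᴴ * B * K a = B := by simpa [krausMap_apply] using hBK
  have hsum : ∑ a, (D a)ᴴ * D a = krausMap (fun a => (K a)ᴴ) (B * B) - B * B := by
    have hexp (a : α) : (D a)ᴴ * D a = B * ((K a)ᴴ * K a) * B - B * ((K a)ᴴ * B * K a)
        - (K a)ᴴ * B * K a * B + (K a)ᴴ * (B * B) * K a := by
      simp only [D, conjTranspose_sub, conjTranspose_mul, hB.eq]
      noncomm_ring
    simp only [hexp, Finset.sum_add_distrib, Finset.sum_sub_distrib, ← Finset.mul_sum,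
      ← Finset.sum_mul, hK, hBK', krausMap_apply, conjTranspose_conjTranspose]
    noncomm_ring
  have hzero : ∑ a, (D a * σ * (D a)ᴴ).trace = 0 := by
    calc ∑ a, (D a * σ * (D a)ᴴ).trace = (σ * ∑ a, (D a)ᴴ * D a).trace := by
          simp only [Finset.mul_sum, trace_sum, trace_mul_cycle (D _), ← Matrix.mul_assoc]
          exact Finset.sum_congr rfl fun a _ => by rw [trace_mul_comm, Matrix.mul_assoc]
      _ = 0 := by rw [hsum, mul_sub, trace_sub, ← trace_krausMap_mul, hσK, sub_self]
  have hDa := (Finset.sum_eq_zero_iff_of_nonneg fun a _ =>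
    (hσ.mul_mul_conjTranspose_same (D a)).trace_nonneg).mp hzero a (Finset.mem_univ a)
  have hσD : σ * (D a)ᴴ = 0 :=
    hσ.mul_eq_zero_of_trace_conjTranspose_mul_mul_eq_zero (by rwa [conjTranspose_conjTranspose])
  simpa [D, conjTranspose_mul, hσ.isHermitian.eq] using congrArg conjTranspose hσD

end Kraus

theorem sum_conjTranspose_mul_mul_mul_eq {J : Type*} [Fintype J] {K : J → Mat d} {B σ : Mat d}
    (h : ∀ i, (K i * B - B * K i) * σ = 0) :
    (∑ i, (K i)ᴴ * B * K i) * σ = (∑ i, (K i)ᴴ * K i) * B * σ := by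
  simp only [Finset.sum_mul]
  refine Finset.sum_congr rfl fun i _ => ?_
  have hi := h i
  rw [sub_mul, sub_eq_zero] at hi
  simp only [Matrix.mul_assoc] at hi ⊢
  rw [hi]

theorem not_infoComplete_of_trace_mul_eq_zero {P : Type} [Fintype P] {G : P → Mat d} {Δ : Mat d}
    (hΔ : Δ.IsHermitian) (hΔ0 : Δ ≠ 0) (htr : Δ.trace = 0) (hG : ∀ p, (Δ * G p).trace = 0) :
    ¬ InfoComplete G := by
  obtain ⟨R, -, -, hP, hN⟩ := hΔ.exists_isStarProjection_posSemidef
  set t := (R * Δ).trace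
  have htN : (R * Δ - Δ).trace = t := by rw [trace_sub, htr, sub_zero]
  have ht0 : t ≠ 0 := by
    intro ht
    apply hΔ0
    rw [← sub_sub_cancel (R * Δ) Δ, hN.trace_eq_zero_iff.mp (htN.trans ht),
      hP.trace_eq_zero_iff.mp ht, sub_zero]
  have hstate (ρ : Mat d) (hρ : ρ.PosSemidef) (hρt : ρ.trace = t) : IsState (t⁻¹ • ρ) :=
    ⟨hρ.smul (inv_nonneg.mpr hP.trace_nonneg),
      by rw [trace_smul, hρt, smul_eq_mul, inv_mul_cancel₀ ht0]⟩
  intro hIC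
  have hPN := hIC _ _ (hstate _ hP rfl) (hstate _ hN htN) fun p => by
    rw [smul_mul, smul_mul, trace_smul, trace_smul, sub_mul, trace_sub, hG p, sub_zero]
  exact hΔ0 (sub_eq_self.mp (smul_right_injective _ (inv_ne_zero ht0) hPN).symm)

theorem trace_commutator_mul_eq_zero {W σ G M : Mat d} (hσG : σ * G = σ * M)
    (hGσ : G * σ = M * σ) (hWM : Commute W M) : ((W * σ - σ * W) * G).trace = 0 := by
  rw [sub_mul, trace_sub, sub_eq_zero]
  calc (W * σ * G).trace = (σ * M * W).trace := by rw [mul_assoc, hσG, trace_mul_comm]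
    _ = (W * M * σ).trace := by rw [mul_assoc, ← hWM.eq, trace_mul_comm]
    _ = (σ * W * G).trace := by rw [mul_assoc, ← hGσ, ← mul_assoc, trace_mul_cycle]

theorem trace_vecMulVec_mul (u v : Fin d → ℂ) (G : Mat d) :
    (vecMulVec u v * G).trace = v ⬝ᵥ (G *ᵥ u) := by
  rw [vecMulVec_mul, trace, diag_vecMulVec, dotProduct_mulVec, dotProduct_comm]
  rfl

theorem Matrix.IsHermitian.star_dotProduct_eq_zero {W : Mat d} (hW : W.IsHermitian)
    {u v : Fin d → ℂ} {l m : ℝ} (hu : W *ᵥ u = l • u) (hv : W *ᵥ v = m • v) (hlm : l ≠ m) :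
    star v ⬝ᵥ u = 0 := by
  have hvW : star v ᵥ* W = m • star v := by
    rw [← hW.eq, ← star_mulVec, hv, star_smul, star_trivial]
  have h : (l : ℂ) * (star v ⬝ᵥ u) = m * (star v ⬝ᵥ u) := by
    calc (l : ℂ) * (star v ⬝ᵥ u) = star v ⬝ᵥ (W *ᵥ u) := by
          rw [hu, dotProduct_smul, Complex.real_smul]
      _ = m * (star v ⬝ᵥ u) := by
          rw [dotProduct_mulVec, hvW, smul_dotProduct, Complex.real_smul]
  exact (mul_eq_mul_right_iff.mp h).resolve_left (by exact_mod_cast hlm)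

theorem trace_vecMulVec_add_mul_eq_zero {W G M : Mat d} (hW : W.IsHermitian)
    (hG : G.IsHermitian) (hWM : Commute W M) {u v : Fin d → ℂ} {l m : ℝ}
    (hu : W *ᵥ u = l • u) (hv : W *ᵥ v = m • v) (hlm : l ≠ m) (hGu : G *ᵥ u = M *ᵥ u) :
    ((vecMulVec u (star v) + vecMulVec v (star u)) * G).trace = 0 := by
  have hMu : W *ᵥ (M *ᵥ u) = l • (M *ᵥ u) := by
    rw [mulVec_mulVec, hWM.eq, ← mulVec_mulVec, hu, mulVec_smul]
  have hvGu : star v ⬝ᵥ (G *ᵥ u) = 0 := by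
    rw [hGu]
    exact hW.star_dotProduct_eq_zero hMu hv hlm
  have huGv : star u ⬝ᵥ (G *ᵥ v) = star (star v ⬝ᵥ (G *ᵥ u)) := by
    rw [star_dotProduct, star_mulVec, ← dotProduct_mulVec, hG.eq]
  rw [add_mul, trace_add, trace_vecMulVec_mul, trace_vecMulVec_mul, huGv, hvGu, star_zero,
    add_zero]

theorem Matrix.IsHermitian.exists_mulVec_eq_smul_ne {W : Mat d} (hW : W.IsHermitian)
    (hWs : ¬ ∃ c : ℂ, W = c • 1) (l : ℝ) : ∃ v ≠ 0, ∃ m : ℝ, m ≠ l ∧ W *ᵥ v = m • v := by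
  have hW' : (W - algebraMap ℝ (Mat d) l).IsHermitian :=
    hW.sub ((IsSelfAdjoint.all l).algebraMap (Mat d))
  have hne : W - algebraMap ℝ (Mat d) l ≠ 0 := by
    rw [sub_ne_zero, Algebra.algebraMap_eq_smul_one]
    exact fun h => hWs ⟨l, by simpa using h⟩
  obtain ⟨v, t, ht, hv0, hv⟩ := hW'.exists_eigenvector_of_ne_zero hne
  refine ⟨v, hv0, l + t, by simpa using ht, ?_⟩
  rw [sub_mulVec, sub_eq_iff_eq_add, Algebra.algebraMap_eq_smul_one, smul_mulVec,
    one_mulVec] at hv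
  rw [hv, add_smul, add_comm]

theorem Matrix.IsHermitian.exists_mulVec_mulVec_eq_smul {W σ : Mat d} (hW : W.IsHermitian)
    (hσ0 : σ ≠ 0) (hWσ : Commute W σ) :
    ∃ w : Fin d → ℂ, σ *ᵥ w ≠ 0 ∧ ∃ l : ℝ, W *ᵥ (σ *ᵥ w) = l • (σ *ᵥ w) := by
  obtain ⟨j, hj⟩ : ∃ j, σ *ᵥ ⇑(hW.eigenvectorBasis j) ≠ 0 := by
    by_contra! h
    have hσU : σ * hW.eigenvectorUnitary = 0 := ext_of_mulVec_single fun j => by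
      rw [← mulVec_mulVec, IsHermitian.eigenvectorUnitary_mulVec, h, zero_mulVec]
    apply hσ0
    rw [← mul_one σ, ← mem_unitaryGroup_iff.mp hW.eigenvectorUnitary.2, ← mul_assoc, hσU,
      zero_mul]
  refine ⟨_, hj, hW.eigenvalues j, ?_⟩
  rw [mulVec_mulVec, hWσ.eq, ← mulVec_mulVec, hW.mulVec_eigenvectorBasis, mulVec_smul]

theorem not_infoComplete_of_mul_eq_mul {P : Type} [Fintype P] {G M : P → Mat d} {σ W : Mat d}
    (hG : ∀ p, (G p).IsHermitian) (hM : ∀ p, (M p).IsHermitian) (hσ : σ.IsHermitian)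
    (hσ0 : σ ≠ 0) (hGσ : ∀ p, G p * σ = M p * σ) (hW : W.IsHermitian)
    (hWs : ¬ ∃ c : ℂ, W = c • 1) (hWM : ∀ p, Commute W (M p)) : ¬ InfoComplete G := by
  by_cases hWσ : Commute W σ
  · obtain ⟨w, hu0, l, hu⟩ := hW.exists_mulVec_mulVec_eq_smul hσ0 hWσ
    obtain ⟨v, hv0, m, hml, hv⟩ := hW.exists_mulVec_eq_smul_ne hWs l
    set u := σ *ᵥ w
    have hΔG {G M : Mat d} (hG : G.IsHermitian) (hWM : Commute W M) (hGu : G *ᵥ u = M *ᵥ u) :=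
      trace_vecMulVec_add_mul_eq_zero hW hG hWM hu hv hml.symm hGu
    refine not_infoComplete_of_trace_mul_eq_zero ?_ ?_ ?_
      fun p => hΔG (hG p) (hWM p) (by simp only [u, mulVec_mulVec, hGσ])
    · rw [IsHermitian, conjTranspose_add, conjTranspose_vecMulVec, conjTranspose_vecMulVec,
        star_star, star_star, add_comm]
    · intro h
      have hΔv := congrArg (· *ᵥ v) h
      simp only [add_mulVec, vecMulVec_mulVec, hW.star_dotProduct_eq_zero hv hu hml,
        op_smul_eq_smul, zero_smul, add_zero, zero_mulVec, smul_eq_zero,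
        dotProduct_star_self_eq_zero] at hΔv
      exact hΔv.elim hv0 hu0
    · -- the trace is the pairing with the Hermitian matrix `1`
      simpa using hΔG isHermitian_one (Commute.one_right W) rfl
  · have hσG (p : P) : σ * G p = σ * M p := by
      simpa [conjTranspose_mul, hσ.eq, (hG p).eq, (hM p).eq] using congrArg conjTranspose (hGσ p)
    refine not_infoComplete_of_trace_mul_eq_zero (Δ := Complex.I • (W * σ - σ * W)) ?_
      (smul_ne_zero Complex.I_ne_zero (sub_ne_zero.mpr hWσ)) ?_ fun p => ?_
    · rw [IsHermitian, conjTranspose_smul, conjTranspose_sub, conjTranspose_mul,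
        conjTranspose_mul, hσ.eq, hW.eq, Complex.star_def, Complex.conj_I, neg_smul, ← smul_neg,
        neg_sub]
    · rw [trace_smul, trace_sub, trace_mul_comm, sub_self, smul_zero]
    · rw [smul_mul, trace_smul, trace_commutator_mul_eq_zero (hσG p) (hGσ p) (hWM p), smul_zero]

theorem mem_centralizer_range_iff {ι : Type} {A : ι → Mat d} (hA : ∀ x, (A x).IsHermitian)
    {Z : Mat d} : Z ∈ StarSubalgebra.centralizer ℂ (Set.range A) ↔ ∀ x, Commute Z (A x) := by
  simp [StarSubalgebra.mem_centralizer_iff, star_eq_conjTranspose, (hA _).eq, commute_iff_eq,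
    eq_comm]

theorem exists_isHermitian_central {ι : Type} {A : ι → Mat d} (hA : ∀ x, (A x).IsHermitian)
    {Z : Mat d} (hZA : ∀ x, Commute Z (A x))
    (hZ : ∀ Y : Mat d, (∀ x, Commute Y (A x)) → Commute Z Y) (hZs : ¬ ∃ c : ℂ, Z = c • 1) :
    ∃ W : Mat d, W.IsHermitian ∧ (∀ x, Commute W (A x)) ∧
      (∀ Y : Mat d, (∀ x, Commute Y (A x)) → Commute W Y) ∧ ¬ ∃ c : ℂ, W = c • 1 := by
  set C := StarSubalgebra.centralizer ℂ (Set.range A)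
  have hC {Y : Mat d} : Y ∈ C ↔ ∀ x, Commute Y (A x) := mem_centralizer_range_iff hA
  have hCC {W : Mat d} :
      W ∈ StarSubalgebra.centralizer ℂ (C : Set (Mat d)) ↔ ∀ Y ∈ C, Commute W Y := by
    rw [StarSubalgebra.mem_centralizer_iff]
    exact ⟨fun h Y hY => (h Y hY).1.symm,
      fun h Y hY => ⟨(h Y hY).eq.symm, (h _ (star_mem hY)).eq.symm⟩⟩
  have hscalar {W : Mat d} : W ∈ Submodule.span ℂ {1} ↔ ∃ c : ℂ, W = c • 1 := by
    simp [Submodule.mem_span_singleton, eq_comm]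
  obtain ⟨W, hWS, hW, hWs⟩ := exists_isSelfAdjoint_mem_notMem
    (S := (C ⊓ StarSubalgebra.centralizer ℂ C).toSubalgebra.toSubmodule)
    (fun _ h => star_mem (s := C ⊓ StarSubalgebra.centralizer ℂ C) h)
    (show Z ∈ C ⊓ _ from ⟨hC.mpr hZA, hCC.mpr fun Y hY => hZ Y (hC.mp hY)⟩) (hscalar.not.mpr hZs)
  exact ⟨W, hW, hC.mp hWS.1, fun Y hY => hCC.mp hWS.2 Y (hC.mpr hY), hscalar.not.mp hWs⟩

theorem stmt17 {d : ℕ} (hd : 0 < d) {ι J κ : Type} [Fintype ι] [Fintype J] [Fintype κ]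
    (A : ι → Mat d) (hA : IsPOVM A)
    -- the center {A(x)}'' ∩ {A(x)}' is strictly larger than ℂ·1
    (hcenter : ∃ Z : Mat d, (∀ x, Commute Z (A x)) ∧
        (∀ Y : Mat d, (∀ x, Commute Y (A x)) → Commute Z Y) ∧
        ¬ ∃ c : ℂ, Z = c • 1)
    -- a channel compatible with A, given by Kraus operators K
    (K : ι → J → Mat d)
    (hK : ∀ x, A x = ∑ i, (K x i)ᴴ * K x i)
    -- B is a POVM whose effects are fixed points of the dual channel
    (B : κ → Mat d) (hB : IsPOVM B)
    (hBfix : ∀ y, ∑ x, ∑ i, (K x i)ᴴ * B y * K x i = B y)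
    -- Fix(Λ*) ⊆ {A(x)}'
    (hFixComm : ∀ X : Mat d, (∑ x, ∑ i, (K x i)ᴴ * X * K x i = X) →
        ∀ x, Commute X (A x)) :
    ¬ InfoComplete (fun p : ι × κ => ∑ i, (K p.1 i)ᴴ * B p.2 * K p.1 i) := by
  have hAH (x : ι) : (A x).IsHermitian := (hA.1 x).1
  have hBH (y : κ) : (B y).IsHermitian := (hB.1 y).1
  obtain ⟨Z, hZA, hZ, hZs⟩ := hcenter
  obtain ⟨W, hW, hWA, hWcomm, hWs⟩ := exists_isHermitian_central hAH hZA hZ hZs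
  set L : ι × J → Mat d := fun p => K p.1 p.2
  have hL : ∑ p, (L p)ᴴ * L p = 1 := by
    rw [← hA.2, Fintype.sum_prod_type]
    exact Finset.sum_congr rfl fun x _ => (hK x).symm
  have hdual (X : Mat d) : krausMap (fun p => (L p)ᴴ) X = ∑ x, ∑ i, (K x i)ᴴ * X * K x i := by
    simp [krausMap_apply, L, Fintype.sum_prod_type]
  obtain ⟨σ, hσ, hσ0, hσL⟩ := exists_posSemidef_ne_zero_krausMap_eq_self hL hd
  have hBA (y : κ) (x : ι) : Commute (B y) (A x) := hFixComm _ (hBfix y) x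
  refine not_infoComplete_of_mul_eq_mul (M := fun p => A p.1 * B p.2) (fun p => ?_)
    (fun p => ((hAH p.1).commute_iff (hBH p.2)).mp (hBA p.2 p.1).symm) hσ.isHermitian hσ0
    (fun p => ?_) hW hWs fun p => (hWA p.1).mul_right (hWcomm _ (hBA p.2))
  · exact isSelfAdjoint_sum _ fun i _ => isHermitian_conjTranspose_mul_mul (K p.1 i) (hBH p.2)
  · rw [hK p.1]
    exact sum_conjTranspose_mul_mul_mul_eq fun i =>
      mul_sub_mul_mul_eq_zero_of_krausMap_eq_self hL hσ hσL (hBH p.2)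
        ((hdual _).trans (hBfix p.2)) (p.1, i)
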